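/- arXiv:2107.14234 — 4 statements merged into one kernel-verified Lean document; each statement's English description precedes it below -/
import Mathlib

section
/- Let the ellipses E: (x-a+β)²/β² + y²/α² = 1 and C: x²/a² + y²/b² = 1 satisfy a ≥ b ≥ α ≥ β > 0 and β < a. If (x,y) lies on both E and C, then either x = a (and y = 0) or x = a(a²α² - 2aα²β + b²β²)/(a²α² - b²β²) with y² = -4aα²b²β(a-β)(b²β - aα²)/((bβ - aα)²(aα + bβ)²). -/
/-!
Clearing denominators, `a²·E - β²·C` eliminates `y²` and leaves a quadratic in `x` which
vanishes at the tangency point `x = a`. Its other factor is linear in `x`, with leading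
coefficient `a²α² - b²β²`; that coefficient cannot vanish, since otherwise the linear factor
would force `β = a`. Substituting the resulting `x` into `C` gives `y²`.
-/

theorem div_sq_add_div_sq_eq_one_iff {K : Type*} [Field K] {p q u v : K} (hp : p ≠ 0)
    (hq : q ≠ 0) :
    u ^ 2 / p ^ 2 + v ^ 2 / q ^ 2 = 1 ↔ q ^ 2 * u ^ 2 + p ^ 2 * v ^ 2 = p ^ 2 * q ^ 2 := by
  rw [div_add_div _ _ (pow_ne_zero 2 hp) (pow_ne_zero 2 hq), div_eq_one_iff_eq (by positivity)]
  constructor <;> intro h <;> linear_combination h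

section EllipseIntersection

variable {K : Type*} [Field K] {a b α β x y : K}

theorem ellipses_common_point_factor
    (hE : α ^ 2 * (x - a + β) ^ 2 + β ^ 2 * y ^ 2 = β ^ 2 * α ^ 2)
    (hC : b ^ 2 * x ^ 2 + a ^ 2 * y ^ 2 = a ^ 2 * b ^ 2) :
    (x - a) * (x * (a ^ 2 * α ^ 2 - b ^ 2 * β ^ 2) -
      a * (a ^ 2 * α ^ 2 - 2 * a * α ^ 2 * β + b ^ 2 * β ^ 2)) = 0 := by
  linear_combination a ^ 2 * hE - β ^ 2 * hC

theorem ellipses_leading_coeff_ne_zero [CharZero K] (ha : a ≠ 0) (hα : α ≠ 0) (hβa : β ≠ a)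
    (hx : x * (a ^ 2 * α ^ 2 - b ^ 2 * β ^ 2) =
      a * (a ^ 2 * α ^ 2 - 2 * a * α ^ 2 * β + b ^ 2 * β ^ 2)) :
    a ^ 2 * α ^ 2 - b ^ 2 * β ^ 2 ≠ 0 := by
  intro hD
  have : 2 * a ^ 2 * α ^ 2 * (a - β) = 0 := by linear_combination -hx + (x + a) * hD
  simp [ha, hα, sub_eq_zero, hβa.symm] at this

theorem ellipses_sq_y_mul_leading_coeff_sq (ha : a ≠ 0)
    (hC : b ^ 2 * x ^ 2 + a ^ 2 * y ^ 2 = a ^ 2 * b ^ 2)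
    (hx : x * (a ^ 2 * α ^ 2 - b ^ 2 * β ^ 2) =
      a * (a ^ 2 * α ^ 2 - 2 * a * α ^ 2 * β + b ^ 2 * β ^ 2)) :
    y ^ 2 * (a ^ 2 * α ^ 2 - b ^ 2 * β ^ 2) ^ 2 =
      -(4 * a * α ^ 2 * b ^ 2 * β * (a - β) * (b ^ 2 * β - a * α ^ 2)) := by
  refine mul_left_cancel₀ (pow_ne_zero 2 ha) ?_
  linear_combination (a ^ 2 * α ^ 2 - b ^ 2 * β ^ 2) ^ 2 * hC -
    b ^ 2 * (x * (a ^ 2 * α ^ 2 - b ^ 2 * β ^ 2) +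
      a * (a ^ 2 * α ^ 2 - 2 * a * α ^ 2 * β + b ^ 2 * β ^ 2)) * hx

end EllipseIntersection

theorem ellipse_ellipse_intersection_points_general (a b α β x y : ℝ)
    (hβ : 0 < β) (hβα : β ≤ α) (hαb : α ≤ b) (hβa : β < a)
    (hE : (x - a + β) ^ 2 / β ^ 2 + y ^ 2 / α ^ 2 = 1)
    (hC : x ^ 2 / a ^ 2 + y ^ 2 / b ^ 2 = 1) :
    (x = a ∧ y = 0) ∨
    (x = a * (a ^ 2 * α ^ 2 - 2 * a * α ^ 2 * β + b ^ 2 * β ^ 2) /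
        (a ^ 2 * α ^ 2 - b ^ 2 * β ^ 2) ∧
      y ^ 2 = -(4 * a * α ^ 2 * b ^ 2 * β * (a - β) * (b ^ 2 * β - a * α ^ 2)) /
        ((b * β - a * α) ^ 2 * (a * α + b * β) ^ 2)) := by
  have hα : 0 < α := hβ.trans_le hβα
  have hb : 0 < b := hα.trans_le hαb
  have ha : 0 < a := hβ.trans hβa
  rw [div_sq_add_div_sq_eq_one_iff hβ.ne' hα.ne'] at hE
  rw [div_sq_add_div_sq_eq_one_iff ha.ne' hb.ne'] at hC
  rcases mul_eq_zero.1 (ellipses_common_point_factor hE hC) with hx | hx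
  · have hxa : x = a := sub_eq_zero.1 hx
    rw [hxa] at hC
    have hy : a ^ 2 * y ^ 2 = 0 := by linear_combination hC
    exact .inl ⟨hxa, by simpa [ha.ne'] using hy⟩
  · rw [sub_eq_zero] at hx
    have hD := ellipses_leading_coeff_ne_zero ha.ne' hα.ne' hβa.ne hx
    refine .inr ⟨(eq_div_iff hD).2 hx, ?_⟩
    have hden : (b * β - a * α) ^ 2 * (a * α + b * β) ^ 2 =
        (a ^ 2 * α ^ 2 - b ^ 2 * β ^ 2) ^ 2 := by ring
    rw [hden, eq_div_iff (pow_ne_zero 2 hD)]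
    exact ellipses_sq_y_mul_leading_coeff_sq ha.ne' hC hx

/-- Intersection points of the small ellipse `E : (x-a+β)²/β² + y²/α² = 1` and the
ellipse `C : x²/a² + y²/b² = 1` with `a ≥ b ≥ α ≥ β > 0` and `β < a`. -/
theorem ellipse_ellipse_intersection_points (a b α β x y : ℝ)
    (hβ : 0 < β) (hβα : β ≤ α) (hαb : α ≤ b) (hba : b ≤ a) (hβa : β < a)
    (hE : (x - a + β) ^ 2 / β ^ 2 + y ^ 2 / α ^ 2 = 1)
    (hC : x ^ 2 / a ^ 2 + y ^ 2 / b ^ 2 = 1) :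
    (x = a ∧ y = 0) ∨
    (x = a * (a ^ 2 * α ^ 2 - 2 * a * α ^ 2 * β + b ^ 2 * β ^ 2) /
        (a ^ 2 * α ^ 2 - b ^ 2 * β ^ 2) ∧
      y ^ 2 = -(4 * a * α ^ 2 * b ^ 2 * β * (a - β) * (b ^ 2 * β - a * α ^ 2)) /
        ((b * β - a * α) ^ 2 * (a * α + b * β) ^ 2)) :=
  ellipse_ellipse_intersection_points_general a b α β x y hβ hβα hαb hβa hE hC
end

section
/- Let α ≥ β > 0 and a > 0. The ellipse E: x²/α² + (y-β)²/β² = 1 and the parabola P: y = x²/a² intersect only at the origin (0,0) if and only if 2/a² ≤ β/α². -/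
/-!
On the parabola `x² = a² y`, so the ellipse equation reduces to `y (y - (2β - a²β²/α²)) = 0`.
Since `y = x²/a² ≥ 0`, a common point other than the origin exists exactly when the second
root `2β - a²β²/α²` is positive, and dividing by `β > 0` turns its sign into `2/a² ≤ β/α²`.
-/

noncomputable def otherIntersectionHeight (a α β : ℝ) : ℝ := 2 * β - a ^ 2 * β ^ 2 / α ^ 2

theorem ellipse_eq_one_iff_of_sq_eq {a α β x y : ℝ} (hβ : β ≠ 0) (hx : x ^ 2 = a ^ 2 * y) :
    x ^ 2 / α ^ 2 + (y - β) ^ 2 / β ^ 2 = 1 ↔ y * (y - otherIntersectionHeight a α β) = 0 := by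
  have key : x ^ 2 / α ^ 2 + (y - β) ^ 2 / β ^ 2 - 1 =
      y * (y - otherIntersectionHeight a α β) / β ^ 2 := by
    rw [hx, otherIntersectionHeight, mul_comm (a ^ 2), mul_div_assoc, mul_comm _ (β ^ 2), mul_div_assoc]
    field_simp
    ring
  rw [← sub_eq_zero, key, div_eq_zero_iff, or_iff_left (pow_ne_zero 2 hβ)]

theorem otherIntersectionHeight_nonpos_iff {a α β : ℝ} (hβ : 0 < β) (ha : a ≠ 0) :
    otherIntersectionHeight a α β ≤ 0 ↔ 2 / a ^ 2 ≤ β / α ^ 2 := by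
  have ha2 : 0 < a ^ 2 := by positivity
  calc otherIntersectionHeight a α β ≤ 0 ↔ 2 * β ≤ a ^ 2 * (β / α ^ 2) * β := by
        rw [otherIntersectionHeight, sub_nonpos]; ring_nf
    _ ↔ 2 ≤ a ^ 2 * (β / α ^ 2) := mul_le_mul_iff_left₀ hβ
    _ ↔ 2 / a ^ 2 ≤ β / α ^ 2 := by rw [div_le_iff₀' ha2]

theorem ellipse_parabola_meet_only_at_origin_iff {a α β : ℝ} (hβ : β ≠ 0) (ha : a ≠ 0) :
    (∀ x y : ℝ, x ^ 2 / α ^ 2 + (y - β) ^ 2 / β ^ 2 = 1 →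
      y = x ^ 2 / a ^ 2 → x = 0 ∧ y = 0) ↔ otherIntersectionHeight a α β ≤ 0 := by
  set h := otherIntersectionHeight a α β
  constructor
  · intro hmeet
    by_contra! hpos
    have hx : (a * √h) ^ 2 = a ^ 2 * h := by rw [mul_pow, Real.sq_sqrt hpos.le]
    have hy : h = (a * √h) ^ 2 / a ^ 2 := by rw [hx, mul_div_cancel_left₀ h (pow_ne_zero 2 ha)]
    have hE := (ellipse_eq_one_iff_of_sq_eq hβ hx).mpr (by rw [sub_self, mul_zero])
    exact hpos.ne' (hmeet _ _ hE hy).2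
  · intro hnonpos x y hE hy
    have hx : x ^ 2 = a ^ 2 * y := by rw [hy, mul_div_cancel₀ _ (pow_ne_zero 2 ha)]
    have hy0 : y = 0 := by
      rcases mul_eq_zero.mp ((ellipse_eq_one_iff_of_sq_eq hβ hx).mp hE) with h0 | hh
      · exact h0
      · have : 0 ≤ y := hy ▸ by positivity
        linarith [sub_eq_zero.mp hh]
    exact ⟨pow_eq_zero_iff two_ne_zero |>.mp (by rw [hx, hy0, mul_zero]), hy0⟩

theorem ellipse_parabola_tangent_only_iff_general (a α β : ℝ)
    (hβ : 0 < β) (ha : 0 < a) :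
    (∀ x y : ℝ, x ^ 2 / α ^ 2 + (y - β) ^ 2 / β ^ 2 = 1 →
      y = x ^ 2 / a ^ 2 → x = 0 ∧ y = 0) ↔
    2 / a ^ 2 ≤ β / α ^ 2 :=
  (ellipse_parabola_meet_only_at_origin_iff hβ.ne' ha.ne').trans
    (otherIntersectionHeight_nonpos_iff hβ ha.ne')

/-- The ellipse `E : x²/α² + (y-β)²/β² = 1` (with `α ≥ β > 0`) and the parabola
`P : y = x²/a²` intersect only at the origin iff `2/a² ≤ β/α²`. -/
theorem ellipse_parabola_tangent_only_iff (a α β : ℝ)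
    (hβ : 0 < β) (hβα : β ≤ α) (ha : 0 < a) :
    (∀ x y : ℝ, x ^ 2 / α ^ 2 + (y - β) ^ 2 / β ^ 2 = 1 →
      y = x ^ 2 / a ^ 2 → x = 0 ∧ y = 0) ↔
    2 / a ^ 2 ≤ β / α ^ 2 :=
  ellipse_parabola_tangent_only_iff_general a α β hβ ha
end

section
/- Let α ≥ β > 0 and a, b > 0. Consider the ellipse E: (x-a-β)²/β² + y²/α² = 1 tangent to the hyperbola H: x²/a² - y²/b² = 1 at the vertex (a,0). Then E and H intersect only at (a,0) if and only if a/b² ≤ β/α². -/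
/-!
Write `u = x - a`. Cleared of denominators, the ellipse reads `β² y² = α² u (2β - u)`, which forces
`0 ≤ u ≤ 2β`, and the hyperbola reads `a² y² = b² u (u + 2a)`. Eliminating `y²` leaves
`u · ((a²α² + β²b²) u - 2aβ (aα² - βb²)) = 0`. If `aα² ≤ βb²` the second factor is positive for
`u > 0`, so `u = 0` and then `y = 0`. If `aα² > βb²`, its root `u₀` lies in `(0, 2β]` and gives a
second common point.
-/

namespace EllipseHyperbola

variable {a b α β x y : ℝ}

lemma ellipse_eq_one_iff (hα : α ≠ 0) (hβ : β ≠ 0) :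
    (x - a - β) ^ 2 / β ^ 2 + y ^ 2 / α ^ 2 = 1 ↔
      β ^ 2 * y ^ 2 = α ^ 2 * ((x - a) * (2 * β - (x - a))) := by
  rw [div_add_div _ _ (by positivity) (by positivity), div_eq_one_iff_eq (by positivity)]
  constructor <;> intro h <;> linear_combination h

lemma hyperbola_eq_one_iff (ha : a ≠ 0) (hb : b ≠ 0) :
    x ^ 2 / a ^ 2 - y ^ 2 / b ^ 2 = 1 ↔ a ^ 2 * y ^ 2 = b ^ 2 * ((x - a) * (x + a)) := by
  rw [div_sub_div _ _ (by positivity) (by positivity), div_eq_one_iff_eq (by positivity)]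
  constructor <;> intro h <;> linear_combination -h

lemma sub_nonneg_of_ellipse (hα : α ≠ 0) (hβ : 0 < β)
    (hE : β ^ 2 * y ^ 2 = α ^ 2 * ((x - a) * (2 * β - (x - a)))) : 0 ≤ x - a := by
  have hprod : 0 ≤ (x - a) * (2 * β - (x - a)) :=
    nonneg_of_mul_nonneg_right (hE ▸ by positivity) (by positivity : 0 < α ^ 2)
  by_contra! hneg
  nlinarith

lemma sub_mul_eq_zero_of_common_point
    (hE : β ^ 2 * y ^ 2 = α ^ 2 * ((x - a) * (2 * β - (x - a))))
    (hH : a ^ 2 * y ^ 2 = b ^ 2 * ((x - a) * (x + a))) :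
    (x - a) * ((a ^ 2 * α ^ 2 + β ^ 2 * b ^ 2) * (x - a) - 2 * a * β * (a * α ^ 2 - β * b ^ 2))
      = 0 := by
  linear_combination a ^ 2 * hE - β ^ 2 * hH

lemma eq_vertex_of_common_point (ha : 0 < a) (hα : α ≠ 0) (hβ : 0 < β)
    (hle : a * α ^ 2 ≤ β * b ^ 2)
    (hE : β ^ 2 * y ^ 2 = α ^ 2 * ((x - a) * (2 * β - (x - a))))
    (hH : a ^ 2 * y ^ 2 = b ^ 2 * ((x - a) * (x + a))) :
    x = a ∧ y = 0 := by
  have hu := sub_nonneg_of_ellipse hα hβ hE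
  have hx : x = a := by
    rcases mul_eq_zero.mp (sub_mul_eq_zero_of_common_point hE hH) with h | h
    · exact sub_eq_zero.mp h
    · have hD : 0 < a ^ 2 * α ^ 2 + β ^ 2 * b ^ 2 := by positivity
      have : 2 * a * β * (a * α ^ 2 - β * b ^ 2) ≤ 0 :=
        mul_nonpos_of_nonneg_of_nonpos (by positivity) (by linarith)
      nlinarith
  subst hx
  refine ⟨rfl, ?_⟩
  simpa [hβ.ne'] using hE

lemma exists_common_point_ne_vertex (ha : 0 < a) (hα : α ≠ 0) (hβ : 0 < β)
    (hlt : β * b ^ 2 < a * α ^ 2) :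
    ∃ x y : ℝ, β ^ 2 * y ^ 2 = α ^ 2 * ((x - a) * (2 * β - (x - a))) ∧
      a ^ 2 * y ^ 2 = b ^ 2 * ((x - a) * (x + a)) ∧ x ≠ a := by
  have hD : 0 < a ^ 2 * α ^ 2 + β ^ 2 * b ^ 2 := by positivity
  set u := 2 * a * β * (a * α ^ 2 - β * b ^ 2) / (a ^ 2 * α ^ 2 + β ^ 2 * b ^ 2) with hu_def
  have hu : (a ^ 2 * α ^ 2 + β ^ 2 * b ^ 2) * u = 2 * a * β * (a * α ^ 2 - β * b ^ 2) :=
    mul_div_cancel₀ _ hD.ne'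
  have hu_pos : 0 < u := div_pos (by have := sub_pos.mpr hlt; positivity) hD
  have hu_le : u ≤ 2 * β := by
    rw [hu_def, div_le_iff₀ hD]
    nlinarith [mul_nonneg (mul_nonneg hβ.le (sq_nonneg b)) (add_pos ha hβ).le]
  set s := Real.sqrt (α ^ 2 * (u * (2 * β - u)))
  have hs : s ^ 2 = α ^ 2 * (u * (2 * β - u)) :=
    Real.sq_sqrt (by have := sub_nonneg.mpr hu_le; positivity)
  have hE : β ^ 2 * (s / β) ^ 2 = α ^ 2 * (u * (2 * β - u)) := by
    rw [div_pow, mul_div_cancel₀ _ (by positivity), hs]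
  refine ⟨a + u, s / β, by simpa using hE, ?_, by linarith⟩
  apply mul_left_cancel₀ (pow_ne_zero 2 hβ.ne')
  linear_combination a ^ 2 * hE - u * hu

end EllipseHyperbola

open EllipseHyperbola in
/-- The ellipse `E : (x-a-β)²/β² + y²/α² = 1` (with `α ≥ β > 0`) and the hyperbola
`H : x²/a² - y²/b² = 1` intersect only at the vertex `(a,0)` iff `a/b² ≤ β/α²`. -/
theorem ellipse_hyperbola_tangent_only_iff (a b α β : ℝ)
    (hβ : 0 < β) (hβα : β ≤ α) (ha : 0 < a) (hb : 0 < b) :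
    (∀ x y : ℝ, (x - a - β) ^ 2 / β ^ 2 + y ^ 2 / α ^ 2 = 1 →
      x ^ 2 / a ^ 2 - y ^ 2 / b ^ 2 = 1 → x = a ∧ y = 0) ↔
    a / b ^ 2 ≤ β / α ^ 2 := by
  have hα : α ≠ 0 := (hβ.trans_le hβα).ne'
  simp only [ellipse_eq_one_iff hα hβ.ne', hyperbola_eq_one_iff ha.ne' hb.ne']
  rw [div_le_div_iff₀ (by positivity) (by positivity)]
  constructor
  · intro h
    by_contra! hlt
    obtain ⟨x, y, hE, hH, hx⟩ := exists_common_point_ne_vertex ha hα hβ hlt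
    exact hx (h x y hE hH).1
  · exact fun hle x y => eq_vertex_of_common_point ha hα hβ hle
end

section
/- A real quartic polynomial 𝔓(λ) = c₄λ⁴ + c₃λ³ + c₂λ² + c₁λ + c₀ with c₄ ≠ 0 has exactly one pair of complex conjugate non-real roots (and two real roots) if and only if Δ₄ < 0, or Δ₄ = 0 and Δ₃ < 0, where Δ₄ is the discriminant of the quartic and Δ₃ = 16c₄²c₀c₂ - 18c₄²c₁² - 4c₄c₂³ + 14c₄c₁c₃c₂ - 6c₄c₀c₃² + c₂²c₃² - 3c₁c₃³. -/
/-!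
Over `ℂ` the quartic is `c₄ ∏ (λ - rᵢ)`, and Vieta's formulas turn `Δ₄` into
`c₄⁶ ∏_{i<j} (rᵢ - rⱼ)²` and `2 Δ₃` into `c₄⁴` times the sum, over the four triples of roots,
of the squared products of their differences. The coefficients are real, so the non-real roots
come in conjugate pairs. A pair `a, ā` contributes the negative factor `(a - ā)² = -4 (Im a)²`,
and with each real root `t` the positive factor `(a - t)(ā - t) = |a - t|²`. Hence one pair and
two real roots give `Δ₄ < 0`, or `Δ₄ = 0` and `Δ₃ < 0` when the real roots coincide; four real
roots make both sums of squares nonnegative; two pairs give `Δ₄ ≥ 0`, with equality only when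
the pairs coincide, and then every triple contains a repeated root, so `Δ₃ = 0`.
-/

open Polynomial ComplexConjugate

noncomputable section Quartic

variable {R S : Type*} [CommRing R] [CommRing S] (c₀ c₁ c₂ c₃ c₄ : R)

def quartic : R[X] := C c₄ * X ^ 4 + C c₃ * X ^ 3 + C c₂ * X ^ 2 + C c₁ * X + C c₀

def quarticΔ₄ : R :=
  256 * c₀ ^ 3 * c₄ ^ 3 - 192 * c₀ ^ 2 * c₁ * c₃ * c₄ ^ 2
    - 128 * c₀ ^ 2 * c₂ ^ 2 * c₄ ^ 2 + 144 * c₀ ^ 2 * c₂ * c₃ ^ 2 * c₄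
    - 27 * c₀ ^ 2 * c₃ ^ 4 + 144 * c₀ * c₁ ^ 2 * c₂ * c₄ ^ 2
    - 6 * c₀ * c₁ ^ 2 * c₃ ^ 2 * c₄ - 4 * c₁ ^ 3 * c₃ ^ 3
    - 80 * c₀ * c₁ * c₂ ^ 2 * c₃ * c₄ + 18 * c₀ * c₁ * c₂ * c₃ ^ 3
    + 16 * c₀ * c₂ ^ 4 * c₄ - 4 * c₀ * c₂ ^ 3 * c₃ ^ 2
    - 27 * c₁ ^ 4 * c₄ ^ 2 + 18 * c₁ ^ 3 * c₂ * c₃ * c₄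
    - 4 * c₁ ^ 2 * c₂ ^ 3 * c₄ + c₁ ^ 2 * c₂ ^ 2 * c₃ ^ 2

def quarticΔ₃ : R :=
  16 * c₄ ^ 2 * c₀ * c₂ - 18 * c₄ ^ 2 * c₁ ^ 2 - 4 * c₄ * c₂ ^ 3
    + 14 * c₄ * c₁ * c₃ * c₂ - 6 * c₄ * c₀ * c₃ ^ 2 + c₂ ^ 2 * c₃ ^ 2
    - 3 * c₁ * c₃ ^ 3

theorem quartic_map (f : R →+* S) :
    (quartic c₀ c₁ c₂ c₃ c₄).map f = quartic (f c₀) (f c₁) (f c₂) (f c₃) (f c₄) := by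
  simp [quartic]

theorem map_quarticΔ₄ (f : R →+* S) :
    f (quarticΔ₄ c₀ c₁ c₂ c₃ c₄) = quarticΔ₄ (f c₀) (f c₁) (f c₂) (f c₃) (f c₄) := by
  simp [quarticΔ₄, map_ofNat]

theorem map_quarticΔ₃ (f : R →+* S) :
    f (quarticΔ₃ c₀ c₁ c₂ c₃ c₄) = quarticΔ₃ (f c₀) (f c₁) (f c₂) (f c₃) (f c₄) := by
  simp [quarticΔ₃, map_ofNat]

variable {c₀ c₁ c₂ c₃ c₄}

theorem natDegree_quartic [Nontrivial R] (hc₄ : c₄ ≠ 0) :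
    (quartic c₀ c₁ c₂ c₃ c₄).natDegree = 4 := by
  unfold quartic; compute_degree!

theorem leadingCoeff_quartic [Nontrivial R] (hc₄ : c₄ ≠ 0) :
    (quartic c₀ c₁ c₂ c₃ c₄).leadingCoeff = c₄ := by
  rw [leadingCoeff, natDegree_quartic hc₄]; simp [quartic]

theorem quartic_eq_of_roots [IsDomain R] {r₁ r₂ r₃ r₄ : R} (hc₄ : c₄ ≠ 0)
    (h : (quartic c₀ c₁ c₂ c₃ c₄).roots = {r₁, r₂, r₃, r₄}) :
    quartic c₀ c₁ c₂ c₃ c₄ = C c₄ * ((X - C r₁) * (X - C r₂) * (X - C r₃) * (X - C r₄)) := by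
  have hcard : (quartic c₀ c₁ c₂ c₃ c₄).roots.card = (quartic c₀ c₁ c₂ c₃ c₄).natDegree := by
    rw [h, natDegree_quartic hc₄]; rfl
  rw [← C_leadingCoeff_mul_prod_multiset_X_sub_C hcard, leadingCoeff_quartic hc₄, h]
  simp only [Multiset.insert_eq_cons, Multiset.map_cons, Multiset.map_singleton,
    Multiset.prod_cons, Multiset.prod_singleton]
  ring

theorem coeffs_eq_of_quartic_eq {r₁ r₂ r₃ r₄ : R}
    (h : quartic c₀ c₁ c₂ c₃ c₄ = C c₄ * ((X - C r₁) * (X - C r₂) * (X - C r₃) * (X - C r₄))) :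
    c₃ = -(c₄ * (r₁ + r₂ + r₃ + r₄)) ∧
      c₂ = c₄ * (r₁ * r₂ + r₁ * r₃ + r₁ * r₄ + r₂ * r₃ + r₂ * r₄ + r₃ * r₄) ∧
      c₁ = -(c₄ * (r₁ * r₂ * r₃ + r₁ * r₂ * r₄ + r₁ * r₃ * r₄ + r₂ * r₃ * r₄)) ∧
      c₀ = c₄ * (r₁ * r₂ * r₃ * r₄) := by
  rw [show C c₄ * ((X - C r₁) * (X - C r₂) * (X - C r₃) * (X - C r₄)) =
      quartic (c₄ * (r₁ * r₂ * r₃ * r₄))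
        (-(c₄ * (r₁ * r₂ * r₃ + r₁ * r₂ * r₄ + r₁ * r₃ * r₄ + r₂ * r₃ * r₄)))
        (c₄ * (r₁ * r₂ + r₁ * r₃ + r₁ * r₄ + r₂ * r₃ + r₂ * r₄ + r₃ * r₄))
        (-(c₄ * (r₁ + r₂ + r₃ + r₄))) c₄ by
    simp only [quartic, map_neg, map_mul, map_add]; ring] at h
  have hcoeff (k : ℕ) := congrArg (coeff · k) h
  simp only [quartic, coeff_add, coeff_C_mul, coeff_X_pow, coeff_C, coeff_X] at hcoeff
  exact ⟨by simpa using hcoeff 3, by simpa using hcoeff 2, by simpa using hcoeff 1,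
    by simpa using hcoeff 0⟩

theorem quarticΔ₄_eq_of_quartic_eq {r₁ r₂ r₃ r₄ : R}
    (h : quartic c₀ c₁ c₂ c₃ c₄ = C c₄ * ((X - C r₁) * (X - C r₂) * (X - C r₃) * (X - C r₄))) :
    quarticΔ₄ c₀ c₁ c₂ c₃ c₄ =
      c₄ ^ 6 * ((r₁ - r₂) * (r₁ - r₃) * (r₁ - r₄) * (r₂ - r₃) * (r₂ - r₄) * (r₃ - r₄)) ^ 2 := by
  obtain ⟨rfl, rfl, rfl, rfl⟩ := coeffs_eq_of_quartic_eq h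
  unfold quarticΔ₄; ring

theorem two_mul_quarticΔ₃_eq_of_quartic_eq {r₁ r₂ r₃ r₄ : R}
    (h : quartic c₀ c₁ c₂ c₃ c₄ = C c₄ * ((X - C r₁) * (X - C r₂) * (X - C r₃) * (X - C r₄))) :
    2 * quarticΔ₃ c₀ c₁ c₂ c₃ c₄ =
      c₄ ^ 4 * (((r₁ - r₂) * (r₁ - r₃) * (r₂ - r₃)) ^ 2 + ((r₁ - r₂) * (r₁ - r₄) * (r₂ - r₄)) ^ 2
        + ((r₁ - r₃) * (r₁ - r₄) * (r₃ - r₄)) ^ 2 + ((r₂ - r₃) * (r₂ - r₄) * (r₃ - r₄)) ^ 2) := by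
  obtain ⟨rfl, rfl, rfl, rfl⟩ := coeffs_eq_of_quartic_eq h
  unfold quarticΔ₃; ring

end Quartic

namespace Complex

theorem sub_conj_sq (z : ℂ) : (z - conj z) ^ 2 = ((-(4 * z.im ^ 2) : ℝ) : ℂ) := by
  rw [sub_conj]; push_cast; ring_nf; rw [I_sq]; ring

variable {s : Multiset ℂ}

theorem exists_eq_cons_cons_conj (hs : s.map conj = s) {a : ℂ} (ha : a ∈ s) (ha' : a.im ≠ 0) :
    ∃ t, s = a ::ₘ conj a ::ₘ t ∧ t.map conj = t := by
  obtain ⟨t', rfl⟩ := Multiset.exists_cons_of_mem ha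
  have hconj : conj a ∈ t' := by
    have : conj a ∈ a ::ₘ t' := hs ▸ Multiset.mem_map_of_mem _ ha
    exact (Multiset.mem_cons.mp this).resolve_left (mt conj_eq_iff_im.mp ha')
  obtain ⟨t, rfl⟩ := Multiset.exists_cons_of_mem hconj
  rw [Multiset.map_cons, Multiset.map_cons, conj_conj, Multiset.cons_swap] at hs
  exact ⟨t, rfl, (Multiset.cons_inj_right _).mp ((Multiset.cons_inj_right _).mp hs)⟩

theorem map_conj_eq_card_two_cases (hs : s.map conj = s) (h2 : s.card = 2) :
    (∃ x y : ℝ, s = {(x : ℂ), (y : ℂ)}) ∨ ∃ a : ℂ, a.im ≠ 0 ∧ s = {a, conj a} := by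
  by_cases hreal : ∀ z ∈ s, z.im = 0
  · lift s to Multiset ℝ using hreal
    obtain ⟨x, y, rfl⟩ := Multiset.card_eq_two.mp (by simpa using h2)
    exact Or.inl ⟨x, y, by simp⟩
  · push Not at hreal
    obtain ⟨a, ha, ha'⟩ := hreal
    obtain ⟨t, rfl, -⟩ := exists_eq_cons_cons_conj hs ha ha'
    obtain rfl : t = 0 := by simpa using h2
    exact Or.inr ⟨a, ha', rfl⟩

theorem map_conj_eq_card_four_cases (hs : s.map conj = s) (h4 : s.card = 4) :
    (∃ x y z w : ℝ, s = {(x : ℂ), (y : ℂ), (z : ℂ), (w : ℂ)}) ∨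
      (∃ (a : ℂ) (x y : ℝ), a.im ≠ 0 ∧ s = {a, conj a, (x : ℂ), (y : ℂ)}) ∨
      ∃ a b : ℂ, a.im ≠ 0 ∧ b.im ≠ 0 ∧ s = {a, conj a, b, conj b} := by
  by_cases hreal : ∀ z ∈ s, z.im = 0
  · lift s to Multiset ℝ using hreal
    obtain ⟨x, y, z, w, rfl⟩ := Multiset.card_eq_four.mp (by simpa using h4)
    exact Or.inl ⟨x, y, z, w, by simp⟩
  · push Not at hreal
    obtain ⟨a, ha, ha'⟩ := hreal
    obtain ⟨t, rfl, ht⟩ := exists_eq_cons_cons_conj hs ha ha'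
    rcases map_conj_eq_card_two_cases ht (by simpa using h4) with ⟨x, y, rfl⟩ | ⟨b, hb, rfl⟩
    · exact Or.inr (Or.inl ⟨a, x, y, ha', rfl⟩)
    · exact Or.inr (Or.inr ⟨a, b, ha', hb, rfl⟩)

end Complex

theorem Polynomial.map_conj_roots_map_ofReal (P : ℝ[X]) :
    (P.map Complex.ofRealHom).roots.map conj = (P.map Complex.ofRealHom).roots := by
  rw [← (IsAlgClosed.splits _).roots_map, Polynomial.map_map]
  congr 2
  ext x; simp

section RealQuartic

open Complex

variable {c₀ c₁ c₂ c₃ c₄ : ℝ}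

theorem ofReal_quarticΔ_of_roots {r₁ r₂ r₃ r₄ : ℂ} (hc₄ : c₄ ≠ 0)
    (h : (quartic (c₀ : ℂ) c₁ c₂ c₃ c₄).roots = {r₁, r₂, r₃, r₄}) :
    ((quarticΔ₄ c₀ c₁ c₂ c₃ c₄ : ℝ) : ℂ) =
        c₄ ^ 6 * ((r₁ - r₂) * (r₁ - r₃) * (r₁ - r₄) * (r₂ - r₃) * (r₂ - r₄) * (r₃ - r₄)) ^ 2 ∧
      2 * ((quarticΔ₃ c₀ c₁ c₂ c₃ c₄ : ℝ) : ℂ) =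
        c₄ ^ 4 * (((r₁ - r₂) * (r₁ - r₃) * (r₂ - r₃)) ^ 2 + ((r₁ - r₂) * (r₁ - r₄) * (r₂ - r₄)) ^ 2
          + ((r₁ - r₃) * (r₁ - r₄) * (r₃ - r₄)) ^ 2 + ((r₂ - r₃) * (r₂ - r₄) * (r₃ - r₄)) ^ 2) := by
  have hfac := quartic_eq_of_roots (ofReal_ne_zero.mpr hc₄) h
  have h₄ := map_quarticΔ₄ c₀ c₁ c₂ c₃ c₄ ofRealHom
  have h₃ := map_quarticΔ₃ c₀ c₁ c₂ c₃ c₄ ofRealHom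
  simp only [ofRealHom_eq_coe] at h₄ h₃
  rw [h₄, h₃]
  exact ⟨quarticΔ₄_eq_of_quartic_eq hfac, two_mul_quarticΔ₃_eq_of_quartic_eq hfac⟩

theorem quarticΔ_nonneg_of_roots_all_real {x y z w : ℝ} (hc₄ : c₄ ≠ 0)
    (h : (quartic (c₀ : ℂ) c₁ c₂ c₃ c₄).roots = {(x : ℂ), (y : ℂ), (z : ℂ), (w : ℂ)}) :
    0 ≤ quarticΔ₄ c₀ c₁ c₂ c₃ c₄ ∧ 0 ≤ quarticΔ₃ c₀ c₁ c₂ c₃ c₄ := by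
  obtain ⟨hΔ₄, hΔ₃⟩ := ofReal_quarticΔ_of_roots hc₄ h
  norm_cast at hΔ₄ hΔ₃
  have h₃ : 0 ≤ 2 * quarticΔ₃ c₀ c₁ c₂ c₃ c₄ := by rw [hΔ₃]; positivity
  exact ⟨by rw [hΔ₄]; positivity, by linarith⟩

theorem quarticΔ_of_roots_one_conj_pair {a : ℂ} {x y : ℝ} (hc₄ : c₄ ≠ 0) (ha : a.im ≠ 0)
    (h : (quartic (c₀ : ℂ) c₁ c₂ c₃ c₄).roots = {a, conj a, (x : ℂ), (y : ℂ)}) :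
    quarticΔ₄ c₀ c₁ c₂ c₃ c₄ < 0 ∨
      quarticΔ₄ c₀ c₁ c₂ c₃ c₄ = 0 ∧ quarticΔ₃ c₀ c₁ c₂ c₃ c₄ < 0 := by
  obtain ⟨hΔ₄, hΔ₃⟩ := ofReal_quarticΔ_of_roots hc₄ h
  have hN (t : ℝ) : 0 < normSq (a - t) :=
    normSq_pos.mpr fun h0 => ha (by simpa using congrArg im h0)
  have hpair (t : ℝ) : (a - t) * (conj a - t) = normSq (a - t) := by
    rw [← mul_conj, map_sub, conj_ofReal]
  have hΔ₄' : quarticΔ₄ c₀ c₁ c₂ c₃ c₄ =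
      -(4 * a.im ^ 2 * c₄ ^ 6 * (x - y) ^ 2 * (normSq (a - x) * normSq (a - y)) ^ 2) := by
    apply ofReal_injective
    calc _ = c₄ ^ 6 * (a - conj a) ^ 2 * ((a - x) * (conj a - x)) ^ 2
          * ((a - y) * (conj a - y)) ^ 2 * (x - y) ^ 2 := by rw [hΔ₄]; ring
      _ = _ := by rw [sub_conj_sq, hpair, hpair]; push_cast; ring
  rcases eq_or_ne x y with rfl | hxy
  · have hΔ₃' : quarticΔ₃ c₀ c₁ c₂ c₃ c₄ = -(4 * a.im ^ 2 * c₄ ^ 4 * normSq (a - x) ^ 2) := by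
      apply ofReal_injective
      apply mul_left_cancel₀ (two_ne_zero (α := ℂ))
      calc _ = 2 * c₄ ^ 4 * (a - conj a) ^ 2 * ((a - x) * (conj a - x)) ^ 2 := by rw [hΔ₃]; ring
        _ = _ := by rw [sub_conj_sq, hpair]; push_cast; ring
    right
    exact ⟨by simp [hΔ₄'], by rw [hΔ₃', neg_lt_zero]; have := hN x; positivity⟩
  · left
    rw [hΔ₄', neg_lt_zero]
    have := hN x; have := hN y
    have : x - y ≠ 0 := sub_ne_zero.mpr hxy
    positivity

theorem quarticΔ_of_roots_two_conj_pairs {a b : ℂ} (hc₄ : c₄ ≠ 0) (ha : a.im ≠ 0)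
    (hb : b.im ≠ 0) (h : (quartic (c₀ : ℂ) c₁ c₂ c₃ c₄).roots = {a, conj a, b, conj b}) :
    0 ≤ quarticΔ₄ c₀ c₁ c₂ c₃ c₄ ∧
      (quarticΔ₄ c₀ c₁ c₂ c₃ c₄ = 0 → quarticΔ₃ c₀ c₁ c₂ c₃ c₄ = 0) := by
  obtain ⟨hΔ₄, hΔ₃⟩ := ofReal_quarticΔ_of_roots hc₄ h
  have hΔ₄' : quarticΔ₄ c₀ c₁ c₂ c₃ c₄ =
      16 * a.im ^ 2 * b.im ^ 2 * c₄ ^ 6 * (normSq (a - b) * normSq (a - conj b)) ^ 2 := by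
    apply ofReal_injective
    calc _ = c₄ ^ 6 * (a - conj a) ^ 2 * (b - conj b) ^ 2 * ((a - b) * conj (a - b)) ^ 2
          * ((a - conj b) * conj (a - conj b)) ^ 2 := by
          rw [hΔ₄, map_sub, map_sub, conj_conj]; ring
      _ = _ := by rw [sub_conj_sq, sub_conj_sq, mul_conj, mul_conj]; push_cast; ring
  refine ⟨by rw [hΔ₄']; positivity, fun h0 => ?_⟩
  have hb' : b = a ∨ b = conj a := by
    have : normSq (a - b) * normSq (a - conj b) = 0 := by simpa [hΔ₄', ha, hb, hc₄] using h0
    rcases mul_eq_zero.mp this with hab | hab <;> rw [normSq_eq_zero, sub_eq_zero] at hab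
    · exact Or.inl hab.symm
    · exact Or.inr (by rw [hab, conj_conj])
  apply ofReal_injective
  apply mul_left_cancel₀ (two_ne_zero (α := ℂ))
  rw [hΔ₃]
  rcases hb' with rfl | rfl <;> simp

end RealQuartic

open Polynomial in
/-- A real quartic `c₄λ⁴ + c₃λ³ + c₂λ² + c₁λ + c₀` with `c₄ ≠ 0` has exactly one pair
of complex conjugate non-real roots (and two real roots) if and only if `Δ₄ < 0`, or
`Δ₄ = 0` and `Δ₃ < 0`. -/
theorem quartic_one_conjugate_pair_iff_discriminants (c₀ c₁ c₂ c₃ c₄ : ℝ)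
    (hc₄ : c₄ ≠ 0)
    (Δ₄ Δ₃ : ℝ)
    (hΔ₄ : Δ₄ = 256 * c₀ ^ 3 * c₄ ^ 3 - 192 * c₀ ^ 2 * c₁ * c₃ * c₄ ^ 2
        - 128 * c₀ ^ 2 * c₂ ^ 2 * c₄ ^ 2 + 144 * c₀ ^ 2 * c₂ * c₃ ^ 2 * c₄
        - 27 * c₀ ^ 2 * c₃ ^ 4 + 144 * c₀ * c₁ ^ 2 * c₂ * c₄ ^ 2
        - 6 * c₀ * c₁ ^ 2 * c₃ ^ 2 * c₄ - 4 * c₁ ^ 3 * c₃ ^ 3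
        - 80 * c₀ * c₁ * c₂ ^ 2 * c₃ * c₄ + 18 * c₀ * c₁ * c₂ * c₃ ^ 3
        + 16 * c₀ * c₂ ^ 4 * c₄ - 4 * c₀ * c₂ ^ 3 * c₃ ^ 2
        - 27 * c₁ ^ 4 * c₄ ^ 2 + 18 * c₁ ^ 3 * c₂ * c₃ * c₄
        - 4 * c₁ ^ 2 * c₂ ^ 3 * c₄ + c₁ ^ 2 * c₂ ^ 2 * c₃ ^ 2)
    (hΔ₃ : Δ₃ = 16 * c₄ ^ 2 * c₀ * c₂ - 18 * c₄ ^ 2 * c₁ ^ 2 - 4 * c₄ * c₂ ^ 3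
        + 14 * c₄ * c₁ * c₃ * c₂ - 6 * c₄ * c₀ * c₃ ^ 2 + c₂ ^ 2 * c₃ ^ 2
        - 3 * c₁ * c₃ ^ 3)
    (p : Polynomial ℂ)
    (hp : p = C (c₄ : ℂ) * X ^ 4 + C (c₃ : ℂ) * X ^ 3 + C (c₂ : ℂ) * X ^ 2
      + C (c₁ : ℂ) * X + C (c₀ : ℂ)) :
    (p.roots.filter (fun z => z.im ≠ 0)).card = 2 ↔
      Δ₄ < 0 ∨ (Δ₄ = 0 ∧ Δ₃ < 0) := by
  replace hp : p = quartic (c₀ : ℂ) c₁ c₂ c₃ c₄ := hp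
  replace hΔ₄ : Δ₄ = quarticΔ₄ c₀ c₁ c₂ c₃ c₄ := hΔ₄
  replace hΔ₃ : Δ₃ = quarticΔ₃ c₀ c₁ c₂ c₃ c₄ := hΔ₃
  have hconj : p.roots.map conj = p.roots := by
    simpa [hp, quartic_map] using map_conj_roots_map_ofReal (quartic c₀ c₁ c₂ c₃ c₄)
  have hcard : p.roots.card = 4 := by
    rw [← natDegree_quartic (Complex.ofReal_ne_zero.mpr hc₄), ← hp]
    exact splits_iff_card_roots.mp (IsAlgClosed.splits p)
  subst hp hΔ₄ hΔ₃
  rcases Complex.map_conj_eq_card_four_cases hconj hcard with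
    ⟨x, y, z, w, hR⟩ | ⟨a, x, y, ha, hR⟩ | ⟨a, b, ha, hb, hR⟩
  · obtain ⟨h₄, h₃⟩ := quarticΔ_nonneg_of_roots_all_real hc₄ hR
    simpa [hR, Multiset.filter_singleton] using ⟨h₄, fun _ => h₃⟩
  · simp [hR, ha, quarticΔ_of_roots_one_conj_pair hc₄ ha hR]
  · obtain ⟨h₄, h₃⟩ := quarticΔ_of_roots_two_conj_pairs hc₄ ha hb hR
    simpa [hR, ha, hb] using ⟨h₄, fun h => (h₃ h).ge⟩
end
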